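/- Let E ∈ ℝ. Suppose there exist u₀, v₀ ∈ ℂ∖{0} such that for no v ∈ ℂ∖{0} is E an eigenvalue of multiplicity at least two of H̃(u₀, v), and for no u ∈ ℂ∖{0} is E an eigenvalue of multiplicity at least two of H̃(u, v₀). Then the set {(θ,φ) ∈ [0,1/p) × [0,1/q) : E is an eigenvalue of multiplicity at least two of Ĥ_{(p,q),(θ,φ)}} is finite. -/

import Mathlib

noncomputable section

/-- `e(x) = exp(2πix)` for complex `x`. -/
def e2pi (x : ℂ) : ℂ := Complex.exp (2 * Real.pi * Complex.I * x)

/-- `V : ℤ² → ℝ` is `(a,b)`-periodic. -/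
def IsPeriodic2 (a b : ℕ) (V : ℤ × ℤ → ℝ) : Prop :=
  ∀ n : ℤ × ℤ, V (n.1 + (a : ℤ), n.2) = V n ∧ V (n.1, n.2 + (b : ℤ)) = V n

/-- Fourier coefficient `V̂(k/p, ℓ/q)` of a `(p,q)`-periodic potential. -/
def Vhat2 (p q : ℕ) (V : ℤ × ℤ → ℝ) (k : Fin p × Fin q) : ℂ :=
  ((p : ℂ) * (q : ℂ))⁻¹ *
    ∑ n : Fin p × Fin q,
      (V ((n.1 : ℤ) + 1, (n.2 : ℤ) + 1) : ℂ) *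
        e2pi (-(((k.1 : ℕ) : ℂ) * (((n.1 : ℕ) : ℂ) + 1) / (p : ℂ)
              + ((k.2 : ℕ) : ℂ) * (((n.2 : ℕ) : ℂ) + 1) / (q : ℂ)))

/-- The matrix `H̃(u,v)` on `ℂ^{{0,…,p−1}×{0,…,q−1}}`; subtraction of indices is taken
mod `p` resp. mod `q`. -/
def Htilde (p q : ℕ) (V : ℤ × ℤ → ℝ) (u v : ℂ) :
    Matrix (Fin p × Fin q) (Fin p × Fin q) ℂ :=
  fun l m =>
    (if l = m then
        e2pi (((l.1 : ℕ) : ℂ) / (p : ℂ)) * u + e2pi (-(((l.1 : ℕ) : ℂ) / (p : ℂ))) * u⁻¹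
          + e2pi (((l.2 : ℕ) : ℂ) / (q : ℂ)) * v + e2pi (-(((l.2 : ℕ) : ℂ) / (q : ℂ))) * v⁻¹
      else 0)
    + Vhat2 p q V (l.1 - m.1, l.2 - m.2)

/-- The Floquet matrix `Ĥ_{(p,q),(θ,φ)} = H̃(e(θ), e(φ))`; its diagonal entry at `(k,ℓ)` is
`2cos(2π(k/p + θ)) + 2cos(2π(ℓ/q + φ))`. -/
def floquet2 (p q : ℕ) (V : ℤ × ℤ → ℝ) (θ φ : ℝ) :
    Matrix (Fin p × Fin q) (Fin p × Fin q) ℂ :=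
  Htilde p q V (e2pi (θ : ℂ)) (e2pi (φ : ℂ))

/-- `E` is an eigenvalue of multiplicity at least two of `A`, i.e. a root of multiplicity `≥ 2`
of the characteristic polynomial `det (λI − A)`. -/
def HasDoubleEv {I : Type*} [Fintype I] [DecidableEq I] (A : Matrix I I ℂ) (E : ℝ) : Prop :=
  2 ≤ A.charpoly.roots.count (E : ℂ)

section Stmt4auxSection
open Polynomial

namespace Stmt4aux

lemma sq_dvd_iff (t : ℂ) (P : ℂ[X]) :
    (X - C t) ^ 2 ∣ P ↔ P.eval t = 0 ∧ P.derivative.eval t = 0 := by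
  constructor
  · rintro ⟨Q, rfl⟩
    refine ⟨by simp, by simp [derivative_mul, derivative_pow]⟩
  · rintro ⟨h1, h2⟩
    obtain ⟨Q, rfl⟩ := (dvd_iff_isRoot).mpr h1
    have hQ : Q.eval t = 0 := by
      have := h2
      simp [derivative_mul] at this
      simpa using this
    obtain ⟨Q', rfl⟩ := (dvd_iff_isRoot).mpr hQ
    exact ⟨Q', by ring⟩

abbrev A := Polynomial ℂ
abbrev R := Polynomial A

def cc (z : ℂ) : R := C (C z)
def uu : R := C X
def vv : R := X

variable (p q : ℕ) (V : ℤ × ℤ → ℝ)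

theorem natDegree_det_le {ι : Type*} [Fintype ι] [DecidableEq ι] {S : Type*} [CommRing S]
    (W : Matrix ι ι S[X]) (d : ℕ) (h : ∀ i j, (W i j).natDegree ≤ d) :
    W.det.natDegree ≤ Fintype.card ι * d := by
  rw [Matrix.det_apply]
  apply natDegree_sum_le_of_forall_le
  intro σ _
  have hprod : (∏ i, W (σ i) i).natDegree ≤ Fintype.card ι * d := by
    refine (natDegree_prod_le _ _).trans ?_
    calc ∑ i, (W (σ i) i).natDegree ≤ ∑ _i : ι, d := Finset.sum_le_sum fun i _ => h _ _
    _ = Fintype.card ι * d := by rw [Finset.sum_const, Finset.card_univ, smul_eq_mul]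
  rcases Int.units_eq_one_or (Equiv.Perm.sign σ) with hs | hs <;> rw [hs] <;>
    simp [natDegree_neg, hprod]

theorem coeff_det {ι : Type*} [Fintype ι] [DecidableEq ι] {S : Type*} [CommRing S]
    (W : Matrix ι ι S[X]) (d : ℕ) (h : ∀ i j, (W i j).natDegree ≤ d) :
    W.det.coeff (Fintype.card ι * d) = (Matrix.of fun i j => (W i j).coeff d).det := by
  rw [Matrix.det_apply, Matrix.det_apply, finset_sum_coeff]
  refine Finset.sum_congr rfl fun σ _ => ?_
  have hc : (∏ i, W (σ i) i).coeff (Fintype.card ι * d) = ∏ i, (W (σ i) i).coeff d := by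
    have := coeff_prod_of_natDegree_le (s := (Finset.univ : Finset ι))
      (f := fun i => W (σ i) i) (n := d) (fun i _ => h _ _)
    simpa [Finset.card_univ] using this
  rcases Int.units_eq_one_or (Equiv.Perm.sign σ) with hs | hs <;> rw [hs] <;>
    simp [hc, Matrix.of_apply, coeff_neg]

/-- `u v • H̃(u,v)` with polynomial entries. -/
def HM (l m : Fin p × Fin q) : R :=
  (if l = m then
      cc (e2pi (((l.1 : ℕ) : ℂ) / (p : ℂ))) * (uu ^ 2 * vv)
        + cc (e2pi (-(((l.1 : ℕ) : ℂ) / (p : ℂ)))) * vv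
        + cc (e2pi (((l.2 : ℕ) : ℂ) / (q : ℂ))) * (uu * vv ^ 2)
        + cc (e2pi (-(((l.2 : ℕ) : ℂ) / (q : ℂ)))) * uu
    else 0)
  + cc (Vhat2 p q V (l.1 - m.1, l.2 - m.2)) * (uu * vv)

def Mlam : Matrix (Fin p × Fin q) (Fin p × Fin q) (Polynomial R) :=
  Matrix.of fun l m => (if l = m then C (uu * vv) * X else 0) - C (HM p q V l m)

variable (E : ℂ)

def FF : R := (Mlam p q V).det.eval (cc E)
def GG : R := (Mlam p q V).det.derivative.eval (cc E)

def phi (a b : ℂ) : R →+* ℂ := eval₂RingHom (evalRingHom a) b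

lemma phi_cc (a b z : ℂ) : phi a b (cc z) = z := by simp [phi, cc]
lemma phi_C (a b : ℂ) (g : A) : phi a b (C g) = g.eval a := by simp [phi]
lemma phi_uu (a b : ℂ) : phi a b uu = a := by simp [phi, uu]
lemma phi_vv (a b : ℂ) : phi a b vv = b := by simp [phi, vv]

lemma phi_HM (a b : ℂ) (ha : a ≠ 0) (hb : b ≠ 0) (l m : Fin p × Fin q) :
    phi a b (HM p q V l m) = a * b * Htilde p q V a b l m := by
  simp only [HM, Htilde]
  split_ifs with h
  · simp only [map_add, map_mul, map_pow, phi_cc, phi_uu, phi_vv]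
    field_simp
  · simp only [map_add, map_mul, map_zero, phi_cc, phi_uu, phi_vv, zero_add]
    ring


lemma map_det_Mlam (a b : ℂ) (ha : a ≠ 0) (hb : b ≠ 0) :
    (Mlam p q V).det.map (phi a b)
      = C ((a * b) ^ (p * q)) * (Htilde p q V a b).charpoly := by
  have h1 : (Mlam p q V).det.map (phi a b)
      = ((Mlam p q V).map (Polynomial.map (phi a b))).det :=
    RingHom.map_det (Polynomial.mapRingHom (phi a b)) (Mlam p q V)
  have h2 : (Mlam p q V).map (Polynomial.map (phi a b))
      = (C (a * b) : ℂ[X]) • (Htilde p q V a b).charmatrix := by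
    refine Matrix.ext fun l m => ?_
    simp only [Matrix.map_apply, Mlam, Matrix.of_apply, Matrix.smul_apply, smul_eq_mul]
    by_cases h : l = m
    · subst h
      rw [if_pos rfl, Matrix.charmatrix_apply_eq]
      simp only [Polynomial.map_sub, Polynomial.map_mul, Polynomial.map_C, Polynomial.map_X,
        map_mul, phi_uu, phi_vv]
      rw [phi_HM p q V a b ha hb, map_mul, map_mul]
      ring
    · rw [if_neg h, Matrix.charmatrix_apply_ne _ _ _ h]
      simp only [Polynomial.map_sub, Polynomial.map_zero, Polynomial.map_C]
      rw [phi_HM p q V a b ha hb, map_mul]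
      ring
  rw [h1, h2, Matrix.det_smul]
  simp [Matrix.charpoly, Fintype.card_prod, mul_pow, ← map_pow]

lemma phi_eval (a b : ℂ) (P : Polynomial R) (x : R) :
    phi a b (P.eval x) = (P.map (phi a b)).eval (phi a b x) := by
  have h : P.eval x = P.eval₂ (RingHom.id R) x := by
    rfl
  rw [h, Polynomial.hom_eval₂, RingHom.comp_id, Polynomial.eval₂_eq_eval_map]

lemma phi_FF (a b : ℂ) (ha : a ≠ 0) (hb : b ≠ 0) :
    phi a b (FF p q V E)
      = (a * b) ^ (p * q) * ((Htilde p q V a b).charpoly.eval E) := by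
  rw [FF, phi_eval, map_det_Mlam p q V a b ha hb, phi_cc, eval_mul, eval_C]

lemma phi_GG (a b : ℂ) (ha : a ≠ 0) (hb : b ≠ 0) :
    phi a b (GG p q V E)
      = (a * b) ^ (p * q) * ((Htilde p q V a b).charpoly.derivative.eval E) := by
  rw [GG, phi_eval, phi_cc, ← Polynomial.derivative_map, map_det_Mlam p q V a b ha hb,
    Polynomial.derivative_C_mul, eval_mul, eval_C]

lemma hasDoubleEv_iff_phi (a b : ℂ) (ha : a ≠ 0) (hb : b ≠ 0) (E : ℝ) :
    HasDoubleEv (Htilde p q V a b) E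
      ↔ (phi a b (FF p q V (E : ℂ)) = 0 ∧ phi a b (GG p q V (E : ℂ)) = 0) := by
  have hchar : (Htilde p q V a b).charpoly ≠ 0 := (Matrix.charpoly_monic _).ne_zero
  have hc : (a * b) ^ (p * q) ≠ 0 := pow_ne_zero _ (mul_ne_zero ha hb)
  rw [HasDoubleEv, Polynomial.count_roots, Polynomial.le_rootMultiplicity_iff hchar,
    sq_dvd_iff, phi_FF p q V _ a b ha hb, phi_GG p q V _ a b ha hb]
  constructor
  · rintro ⟨hl, hr⟩; exact ⟨by rw [hl, mul_zero], by rw [hr, mul_zero]⟩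
  · rintro ⟨hl, hr⟩
    exact ⟨(mul_eq_zero.mp hl).resolve_left hc, (mul_eq_zero.mp hr).resolve_left hc⟩

def ME : Matrix (Fin p × Fin q) (Fin p × Fin q) R :=
  Matrix.of fun l m => (if l = m then uu * vv * cc E else 0) - HM p q V l m

lemma FF_eq_det_ME : FF p q V E = (ME p q V E).det := by
  rw [FF]
  have h1 : (Mlam p q V).det.eval (cc E) = (evalRingHom (cc E)) (Mlam p q V).det := rfl
  have h2 := RingHom.map_det (evalRingHom (cc E)) (Mlam p q V)
  rw [h1, h2]
  congr 1
  refine Matrix.ext fun l m => ?_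
  simp only [Matrix.map_apply, Mlam, ME, Matrix.of_apply, coe_evalRingHom, eval_sub, eval_C]
  congr 1
  split_ifs with h <;> simp [h]

lemma entries_natDegree_le (l m : Fin p × Fin q) : ((ME p q V E) l m).natDegree ≤ 2 := by
  simp only [ME, Matrix.of_apply, HM, cc, uu, vv]
  split_ifs <;> compute_degree <;> norm_num

lemma ME_eval_zero (l m : Fin p × Fin q) :
    ((ME p q V E) l m).eval 0
      = if l = m then -(C (e2pi (-(((l.2 : ℕ) : ℂ) / (q : ℂ)))) * X) else 0 := by
  simp only [ME, Matrix.of_apply, HM, cc, uu, vv]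
  split_ifs with h <;> simp

lemma ME_coeff_two (l m : Fin p × Fin q) :
    ((ME p q V E) l m).coeff 2
      = if l = m then -(C (e2pi (((l.2 : ℕ) : ℂ) / (q : ℂ))) * X) else 0 := by
  simp only [ME, Matrix.of_apply, HM, cc, uu, vv]
  split_ifs with h <;>
    · simp only [← C_pow, ← mul_assoc, ← C_mul, coeff_sub, coeff_add, coeff_C_mul,
        coeff_mul_C, coeff_X, coeff_X_pow, coeff_C, zero_sub]
      norm_num

lemma FF_coeff_zero : (FF p q V E).coeff 0
    = ∏ l : Fin p × Fin q, (-(C (e2pi (-(((l.2 : ℕ) : ℂ) / (q : ℂ)))) * X) : A) := by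
  rw [FF_eq_det_ME, coeff_zero_eq_eval_zero]
  have h2 := RingHom.map_det (evalRingHom (0 : A)) (ME p q V E)
  rw [show (ME p q V E).det.eval 0 = (evalRingHom (0 : A)) (ME p q V E).det from rfl, h2]
  have hdiag : (evalRingHom (0 : A)).mapMatrix (ME p q V E)
      = Matrix.diagonal (fun l : Fin p × Fin q =>
          -(C (e2pi (-(((l.2 : ℕ) : ℂ) / (q : ℂ)))) * X)) := by
    refine Matrix.ext fun l m => ?_
    rw [RingHom.mapMatrix_apply, Matrix.map_apply, coe_evalRingHom, ME_eval_zero]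
    by_cases h : l = m
    · subst h; rw [if_pos rfl, Matrix.diagonal_apply_eq]
    · rw [if_neg h, Matrix.diagonal_apply_ne _ h]
  rw [hdiag, Matrix.det_diagonal]

lemma FF_coeff_top : (FF p q V E).coeff (Fintype.card (Fin p × Fin q) * 2)
    = ∏ l : Fin p × Fin q, (-(C (e2pi (((l.2 : ℕ) : ℂ) / (q : ℂ))) * X) : A) := by
  rw [FF_eq_det_ME, coeff_det _ 2 (entries_natDegree_le p q V E)]
  have hdiag : (Matrix.of fun l m : Fin p × Fin q => ((ME p q V E) l m).coeff 2)
      = Matrix.diagonal (fun l : Fin p × Fin q =>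
          -(C (e2pi (((l.2 : ℕ) : ℂ) / (q : ℂ))) * X)) := by
    refine Matrix.ext fun l m => ?_
    rw [Matrix.of_apply, ME_coeff_two]
    by_cases h : l = m
    · subst h; rw [if_pos rfl, Matrix.diagonal_apply_eq]
    · rw [if_neg h, Matrix.diagonal_apply_ne _ h]
  rw [hdiag, Matrix.det_diagonal]

lemma prod_neg_C_mul_X_ne_zero {c : Fin p × Fin q → ℂ} (hc : ∀ l, c l ≠ 0) :
    (∏ l : Fin p × Fin q, (-(C (c l) * X) : A)) ≠ 0 := by
  rw [Finset.prod_ne_zero_iff]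
  intro l _
  simp [hc l, X_ne_zero]

lemma eval_ne_zero_of_dvd_prod {c : Fin p × Fin q → ℂ} (hc : ∀ l, c l ≠ 0) {w : A}
    (hw : w ∣ ∏ l : Fin p × Fin q, (-(C (c l) * X) : A)) {a : ℂ} (ha : a ≠ 0) :
    w.eval a ≠ 0 := by
  obtain ⟨t, ht⟩ := hw
  intro h0
  have heq := congrArg (eval a) ht
  rw [eval_mul, h0, zero_mul, eval_prod] at heq
  have : (∏ l : Fin p × Fin q, eval a (-(C (c l) * X))) ≠ 0 := by
    rw [Finset.prod_ne_zero_iff]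
    intro l _
    simp [hc l, ha]
  exact this heq

lemma FF_natDegree : (FF p q V E).natDegree = Fintype.card (Fin p × Fin q) * 2 := by
  refine le_antisymm ?_ ?_
  · rw [FF_eq_det_ME]; exact natDegree_det_le _ 2 (entries_natDegree_le p q V E)
  · refine le_natDegree_of_ne_zero ?_
    rw [FF_coeff_top]
    exact prod_neg_C_mul_X_ne_zero p q (fun l => Complex.exp_ne_zero _)

lemma FF_leadingCoeff : (FF p q V E).leadingCoeff
    = ∏ l : Fin p × Fin q, (-(C (e2pi (((l.2 : ℕ) : ℂ) / (q : ℂ))) * X) : A) := by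
  rw [leadingCoeff, FF_natDegree, FF_coeff_top]

lemma phi_eq_eval_map (a b : ℂ) (P : R) :
    phi a b P = (P.map (evalRingHom a)).eval b := by
  rw [phi, coe_eval₂RingHom, eval₂_eq_eval_map]

lemma bezout_const {h G : R} (hirr : Irreducible h) (hdeg : h.natDegree ≠ 0)
    (hG : ¬ h ∣ G) : ∃ (s : A) (a' b' : R), s ≠ 0 ∧ C s = a' * h + b' * G := by
  classical
  have hG0 : G ≠ 0 := fun h0 => hG (h0 ▸ dvd_zero h)
  have hprim : h.IsPrimitive := by
    intro r hr
    obtain ⟨t, ht⟩ := hr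
    rcases hirr.isUnit_or_isUnit ht with hu | hu
    · exact isUnit_C.mp hu
    · exfalso
      apply hdeg
      have hC0 : (C r : R) ≠ 0 := fun h0 => hirr.ne_zero (by rw [ht, h0, zero_mul])
      rw [ht, natDegree_mul hC0 hu.ne_zero, natDegree_C, zero_add,
        natDegree_eq_zero_of_isUnit hu]
  set K := FractionRing A
  have hinj : Function.Injective (algebraMap A K) := IsFractionRing.injective A K
  set hK := h.map (algebraMap A K) with hKdef
  set GK := G.map (algebraMap A K) with GKdef
  have hKirr : Irreducible hK :=
    (Polynomial.IsPrimitive.irreducible_iff_irreducible_map_fraction_map hprim).mp hirr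
  have hKnd : ¬ hK ∣ GK := by
    intro hd
    apply hG
    have hcne : algebraMap A K G.content ≠ 0 := by
      intro hc
      exact hG0 (content_eq_zero_iff.mp ((injective_iff_map_eq_zero _).mp hinj _ hc))
    have hunit : IsUnit (C (algebraMap A K G.content) : Polynomial K) :=
      isUnit_C.mpr (isUnit_iff_ne_zero.mpr hcne)
    have hinv : (↑hunit.unit⁻¹ : Polynomial K) * C (algebraMap A K G.content) = 1 :=
      hunit.val_inv_mul
    have hGdecomp : GK = C (algebraMap A K G.content) * G.primPart.map (algebraMap A K) := by
      conv_lhs => rw [GKdef]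
      conv_lhs => rw [G.eq_C_content_mul_primPart]
      rw [Polynomial.map_mul, Polynomial.map_C]
    obtain ⟨t, ht⟩ := hd
    rw [hGdecomp] at ht
    have hdP : hK ∣ G.primPart.map (algebraMap A K) := by
      refine ⟨(↑hunit.unit⁻¹ : Polynomial K) * t, ?_⟩
      have h2 := congrArg (fun x => (↑hunit.unit⁻¹ : Polynomial K) * x) ht
      rw [← mul_assoc, hinv, one_mul] at h2
      rw [h2]; ring
    exact (hprim.dvd_of_fraction_map_dvd_fraction_map hdP).trans
      (primPart_dvd G)
  have hgcd := EuclideanDomain.gcd_eq_gcd_ab hK GK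
  have hgu : IsUnit (EuclideanDomain.gcd hK GK) := by
    rcases EuclideanDomain.gcd_dvd_left hK GK with ⟨e, he⟩
    rcases hKirr.isUnit_or_isUnit he with hu | hu
    · exact hu
    · exfalso
      apply hKnd
      obtain ⟨w, hw⟩ := EuclideanDomain.gcd_dvd_right hK GK
      have h2 : e * (↑hu.unit⁻¹ : Polynomial K) = 1 := hu.mul_val_inv
      refine ⟨(↑hu.unit⁻¹ : Polynomial K) * w, ?_⟩
      calc GK = EuclideanDomain.gcd hK GK * w := hw
      _ = (EuclideanDomain.gcd hK GK * e) * ((↑hu.unit⁻¹ : Polynomial K) * w) := by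
            rw [show EuclideanDomain.gcd hK GK * e * ((↑hu.unit⁻¹ : Polynomial K) * w)
              = EuclideanDomain.gcd hK GK * (e * (↑hu.unit⁻¹ : Polynomial K)) * w from by ring,
              h2, mul_one]
      _ = hK * ((↑hu.unit⁻¹ : Polynomial K) * w) := by rw [← he]
  have hcinv : (↑hgu.unit⁻¹ : Polynomial K) * EuclideanDomain.gcd hK GK = 1 :=
    hgu.val_inv_mul
  set cK := (↑hgu.unit⁻¹ : Polynomial K) with cKdef
  have hone : (1 : Polynomial K) = hK * (cK * EuclideanDomain.gcdA hK GK)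
      + GK * (cK * EuclideanDomain.gcdB hK GK) := by
    calc (1 : Polynomial K) = cK * EuclideanDomain.gcd hK GK := hcinv.symm
    _ = _ := by rw [hgcd]; ring
  obtain ⟨sa, hsa⟩ := IsLocalization.integerNormalization_map_to_map (nonZeroDivisors A)
    (cK * EuclideanDomain.gcdA hK GK)
  obtain ⟨sb, hsb⟩ := IsLocalization.integerNormalization_map_to_map (nonZeroDivisors A)
    (cK * EuclideanDomain.gcdB hK GK)
  set iA := IsLocalization.integerNormalization (nonZeroDivisors A)
    (cK * EuclideanDomain.gcdA hK GK)
  set iB := IsLocalization.integerNormalization (nonZeroDivisors A)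
    (cK * EuclideanDomain.gcdB hK GK)
  have hsmul : ∀ (r : A) (P : Polynomial K), r • P = C (algebraMap A K r) * P := by
    intro r P
    rw [Algebra.smul_def, IsScalarTower.algebraMap_apply A K (Polynomial K),
      Polynomial.algebraMap_eq]
  refine ⟨(sa : A) * (sb : A), C (sb : A) * iA, C (sa : A) * iB, ?_, ?_⟩
  · exact mul_ne_zero (nonZeroDivisors.ne_zero sa.2) (nonZeroDivisors.ne_zero sb.2)
  · apply Polynomial.map_injective (algebraMap A K) hinj
    rw [Polynomial.map_add, Polynomial.map_mul, Polynomial.map_mul, Polynomial.map_mul,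
      Polynomial.map_mul, Polynomial.map_C, Polynomial.map_C, Polynomial.map_C, hsa, hsb,
      hsmul, hsmul]
    calc (C (algebraMap A K ((sa : A) * (sb : A))) : Polynomial K)
        = C (algebraMap A K (sa : A)) * C (algebraMap A K (sb : A)) * 1 := by
          rw [map_mul, map_mul]; ring
    _ = _ := by rw [hone, ← hKdef, ← GKdef]; ring

lemma key_factor {F G h : R} {u₀ : ℂ} (hu₀ : u₀ ≠ 0)
    (h0 : ∀ w : A, w ∣ F.coeff 0 → ∀ a : ℂ, a ≠ 0 → w.eval a ≠ 0)
    (hT : ∀ w : A, w ∣ F.leadingCoeff → ∀ a : ℂ, a ≠ 0 → w.eval a ≠ 0)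
    (h₁ : ∀ b : ℂ, b ≠ 0 → ¬(phi u₀ b F = 0 ∧ phi u₀ b G = 0))
    (hirr : Irreducible h) (hdvd : h ∣ F) :
    {z : ℂ × ℂ | z.1 ≠ 0 ∧ z.2 ≠ 0 ∧ phi z.1 z.2 h = 0 ∧ phi z.1 z.2 G = 0}.Finite := by
  classical
  obtain ⟨k, hk⟩ := hdvd
  have hlead : ∀ a : ℂ, a ≠ 0 → (h.leadingCoeff.eval a : ℂ) ≠ 0 := by
    intro a ha
    exact hT h.leadingCoeff ⟨k.leadingCoeff, by rw [hk, leadingCoeff_mul]⟩ a ha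
  have hc0 : ∀ a : ℂ, a ≠ 0 → ((h.coeff 0).eval a : ℂ) ≠ 0 := by
    intro a ha
    exact h0 (h.coeff 0) ⟨k.coeff 0, by rw [hk, mul_coeff_zero]⟩ a ha
  by_cases hdeg : h.natDegree = 0
  · refine Set.Finite.subset Set.finite_empty fun z hz => ?_
    obtain ⟨hz1, hz2, hzh, hzG⟩ := hz
    have hCh : h = C (h.coeff 0) := eq_C_of_natDegree_eq_zero hdeg
    rw [hCh, phi_C] at hzh
    exact absurd hzh (hc0 z.1 hz1)
  · by_cases hG : h ∣ G
    · exfalso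
      set hm := h.map (evalRingHom u₀) with hmdef
      have hdm : hm.natDegree = h.natDegree :=
        natDegree_map_of_leadingCoeff_ne_zero _ (hlead u₀ hu₀)
      have hm0 : hm ≠ 0 := fun hh => hdeg (by rw [← hdm, hh, natDegree_zero])
      have hdegpos : 0 < hm.degree := by
        rw [degree_eq_natDegree hm0]
        exact_mod_cast Nat.pos_of_ne_zero (fun hh => hdeg (hdm ▸ hh))
      obtain ⟨b, hb⟩ := Complex.exists_root hdegpos
      have hb0 : b ≠ 0 := by
        intro hbz
        subst hbz
        have hcoeff : hm.coeff 0 = 0 := by rw [coeff_zero_eq_eval_zero]; exact hb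
        rw [hmdef, coeff_map, coe_evalRingHom] at hcoeff
        exact hc0 u₀ hu₀ hcoeff
      apply h₁ b hb0
      have hphih : phi u₀ b h = 0 := by rw [phi_eq_eval_map]; exact hb
      obtain ⟨t, ht⟩ := hG
      exact ⟨by rw [hk, map_mul, hphih, zero_mul], by rw [ht, map_mul, hphih, zero_mul]⟩
    · obtain ⟨s, a', b', hs0, hsEq⟩ := bezout_const hirr hdeg hG
      refine Set.Finite.subset (Set.Finite.biUnion (s.roots.toFinset.finite_toSet)
        (fun a _ => Set.Finite.prod (Set.finite_singleton a)
          (((h.map (evalRingHom a)).roots.toFinset.finite_toSet)))) ?_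
      rintro ⟨z1, z2⟩ ⟨hz1, hz2, hzh, hzG⟩
      have hsa : s.eval z1 = 0 := by
        have := congrArg (phi z1 z2) hsEq
        rw [phi_C, map_add, map_mul, map_mul, hzh, hzG, mul_zero, mul_zero, add_zero] at this
        exact this
      have hm0 : h.map (evalRingHom z1) ≠ 0 := by
        intro hh
        have : (h.map (evalRingHom z1)).coeff h.natDegree = 0 := by rw [hh, coeff_zero]
        rw [coeff_map, coe_evalRingHom] at this
        exact hlead z1 hz1 this
      simp only [Set.mem_iUnion]
      refine ⟨z1, ?_, ?_⟩
      · simp only [Finset.mem_coe, Multiset.mem_toFinset, mem_roots', IsRoot.def]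
        exact ⟨hs0, hsa⟩
      · constructor
        · exact Set.mem_singleton _
        · simp only [Finset.mem_coe, Multiset.mem_toFinset, mem_roots', IsRoot.def]
          refine ⟨hm0, ?_⟩
          rw [← phi_eq_eval_map]
          exact hzh

lemma key {F G : R} {u₀ : ℂ} (hu₀ : u₀ ≠ 0)
    (h0 : ∀ w : A, w ∣ F.coeff 0 → ∀ a : ℂ, a ≠ 0 → w.eval a ≠ 0)
    (hT : ∀ w : A, w ∣ F.leadingCoeff → ∀ a : ℂ, a ≠ 0 → w.eval a ≠ 0)
    (h₁ : ∀ b : ℂ, b ≠ 0 → ¬(phi u₀ b F = 0 ∧ phi u₀ b G = 0)) :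
    {z : ℂ × ℂ | z.1 ≠ 0 ∧ z.2 ≠ 0 ∧ phi z.1 z.2 F = 0 ∧ phi z.1 z.2 G = 0}.Finite := by
  classical
  have hF0 : F ≠ 0 := by
    intro h0F
    have := hT 0 (by rw [h0F, leadingCoeff_zero]) 1 one_ne_zero
    simp at this
  obtain ⟨un, hun⟩ := (UniqueFactorizationMonoid.factors_prod hF0).symm
  refine Set.Finite.subset (Set.Finite.biUnion
    ((UniqueFactorizationMonoid.factors F).toFinset.finite_toSet)
    (fun h hm => key_factor hu₀ h0 hT h₁
      (UniqueFactorizationMonoid.irreducible_of_factor h (Multiset.mem_toFinset.mp hm))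
      (UniqueFactorizationMonoid.dvd_of_mem_factors (Multiset.mem_toFinset.mp hm)))) ?_
  rintro ⟨z1, z2⟩ ⟨hz1, hz2, hzF, hzG⟩
  have hzprod : phi z1 z2 (UniqueFactorizationMonoid.factors F).prod = 0 := by
    have := congrArg (phi z1 z2) hun
    rw [map_mul, hzF, zero_mul] at this
    exact this.symm
  rw [map_multiset_prod] at hzprod
  have hzero : (0 : ℂ) ∈ (UniqueFactorizationMonoid.factors F).map (phi z1 z2) :=
    Multiset.prod_eq_zero_iff.mp hzprod
  obtain ⟨h, hhmem, hh0⟩ := Multiset.mem_map.mp hzero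
  simp only [Set.mem_iUnion]
  exact ⟨h, Finset.mem_coe.mpr (Multiset.mem_toFinset.mpr hhmem), ⟨hz1, hz2, hh0, hzG⟩⟩

lemma e2pi_injOn {θ θ' : ℝ} (h0 : 0 ≤ θ) (h1 : θ < 1) (h0' : 0 ≤ θ') (h1' : θ' < 1)
    (heq : e2pi (θ : ℂ) = e2pi (θ' : ℂ)) : θ = θ' := by
  rw [e2pi, e2pi, Complex.exp_eq_exp_iff_exists_int] at heq
  obtain ⟨n, hn⟩ := heq
  have hne : (2 * (Real.pi : ℂ) * Complex.I) ≠ 0 := by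
    simp [Real.pi_ne_zero, Complex.I_ne_zero, Complex.ofReal_ne_zero]
  have hn' : (2 * (Real.pi : ℂ) * Complex.I) * (θ : ℂ)
      = (2 * (Real.pi : ℂ) * Complex.I) * ((θ' : ℂ) + (n : ℂ)) := by
    rw [hn]; push_cast; ring
  have h2 : (θ : ℂ) = (θ' : ℂ) + (n : ℂ) := mul_left_cancel₀ hne hn'
  have h3 : θ = θ' + (n : ℝ) := by exact_mod_cast h2
  have h4 : (-1 : ℝ) < (n : ℝ) := by linarith
  have h5 : ((n : ℝ)) < 1 := by linarith
  have h6 : (-1 : ℤ) < n := by exact_mod_cast h4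
  have h7 : n < 1 := by exact_mod_cast h5
  have : n = 0 := by omega
  rw [this] at h3
  simpa using h3

end Stmt4aux

end Stmt4auxSection

/-- **Algebraic reduction.** Let `p, q ≥ 2`, `V` be `(p,q)`-periodic and `E ∈ ℝ`.
Suppose there are `u₀, v₀ ≠ 0` such that for no `v ≠ 0` is `E` an eigenvalue of
multiplicity at least two of `H̃(u₀, v)`, and for no `u ≠ 0` is `E` an eigenvalue of
multiplicity at least two of `H̃(u, v₀)`. Then the set of `(θ,φ) ∈ [0,1/p) × [0,1/q)`
for which `E` is an eigenvalue of multiplicity at least two of `Ĥ_{(p,q),(θ,φ)}` is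
finite. -/
theorem stmt4 (p q : ℕ) (hp : 2 ≤ p) (hq : 2 ≤ q)
    (V : ℤ × ℤ → ℝ) (hV : IsPeriodic2 p q V) (E : ℝ)
    (u₀ v₀ : ℂ) (hu₀ : u₀ ≠ 0) (hv₀ : v₀ ≠ 0)
    (h₁ : ∀ v : ℂ, v ≠ 0 → ¬ HasDoubleEv (Htilde p q V u₀ v) E)
    (h₂ : ∀ u : ℂ, u ≠ 0 → ¬ HasDoubleEv (Htilde p q V u v₀) E) :
    {x : ℝ × ℝ | x.1 ∈ Set.Ico (0 : ℝ) (1 / (p : ℝ)) ∧ x.2 ∈ Set.Ico (0 : ℝ) (1 / (q : ℝ)) ∧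
      HasDoubleEv (floquet2 p q V x.1 x.2) E}.Finite := by
  classical
  open Stmt4aux in
  have h0 : ∀ w : Stmt4aux.A, w ∣ (Stmt4aux.FF p q V (E : ℂ)).coeff 0 →
      ∀ a : ℂ, a ≠ 0 → w.eval a ≠ 0 := by
    intro w hw a ha
    rw [Stmt4aux.FF_coeff_zero] at hw
    exact Stmt4aux.eval_ne_zero_of_dvd_prod p q (fun l => Complex.exp_ne_zero _) hw ha
  have hT : ∀ w : Stmt4aux.A, w ∣ (Stmt4aux.FF p q V (E : ℂ)).leadingCoeff →
      ∀ a : ℂ, a ≠ 0 → w.eval a ≠ 0 := by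
    intro w hw a ha
    rw [Stmt4aux.FF_leadingCoeff] at hw
    exact Stmt4aux.eval_ne_zero_of_dvd_prod p q (fun l => Complex.exp_ne_zero _) hw ha
  have h₁' : ∀ b : ℂ, b ≠ 0 → ¬(Stmt4aux.phi u₀ b (Stmt4aux.FF p q V (E : ℂ)) = 0 ∧
      Stmt4aux.phi u₀ b (Stmt4aux.GG p q V (E : ℂ)) = 0) := by
    intro b hb hcon
    exact h₁ b hb ((Stmt4aux.hasDoubleEv_iff_phi p q V u₀ b hu₀ hb E).mpr hcon)
  have hfin := Stmt4aux.key hu₀ h0 hT h₁'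
  set f : ℝ × ℝ → ℂ × ℂ := fun x => (e2pi (x.1 : ℂ), e2pi (x.2 : ℂ)) with hf
  apply Set.Finite.of_finite_image (f := f)
  · refine Set.Finite.subset hfin ?_
    rintro z ⟨x, hx, rfl⟩
    obtain ⟨hx1, hx2, hx3⟩ := hx
    refine ⟨Complex.exp_ne_zero _, Complex.exp_ne_zero _, ?_⟩
    exact (Stmt4aux.hasDoubleEv_iff_phi p q V _ _ (Complex.exp_ne_zero _)
      (Complex.exp_ne_zero _) E).mp hx3
  · have hple : 1 / (p : ℝ) ≤ 1 := by
      rw [div_le_one (by positivity)]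
      exact_mod_cast Nat.one_le_of_lt hp
    have hqle : 1 / (q : ℝ) ≤ 1 := by
      rw [div_le_one (by positivity)]
      exact_mod_cast Nat.one_le_of_lt hq
    rintro ⟨x1, x2⟩ hx ⟨y1, y2⟩ hy hxy
    obtain ⟨⟨hx10, hx11⟩, ⟨hx20, hx21⟩, -⟩ := hx
    obtain ⟨⟨hy10, hy11⟩, ⟨hy20, hy21⟩, -⟩ := hy
    simp only [hf, Prod.mk.injEq] at hxy
    have e1 : x1 = y1 := Stmt4aux.e2pi_injOn hx10 (lt_of_lt_of_le hx11 hple)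
      hy10 (lt_of_lt_of_le hy11 hple) hxy.1
    have e2 : x2 = y2 := Stmt4aux.e2pi_injOn hx20 (lt_of_lt_of_le hx21 hqle)
      hy20 (lt_of_lt_of_le hy21 hqle) hxy.2
    rw [e1, e2]

end
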